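/- (Invariance under nonsingular transformations.) Let Λ be a cross-impact model which is split-invariant and rotation-invariant. Then for every invertible real n×n matrix M and every triple (Σ,Ω,R): Λ((M⁻¹)ᵀ Σ M⁻¹, M Ω Mᵀ, (M⁻¹)ᵀ R Mᵀ) = (M⁻¹)ᵀ Λ(Σ,Ω,R) M⁻¹; i.e. any split- and rotation-invariant cross-impact model is invariant under the action of any nonsingular matrix. -/

import Mathlib

open Matrix
open scoped Classical

/-- `sqrtm A` is the unique symmetric positive semidefinite square root of a
symmetric positive semidefinite real matrix `A` (junk value `0` otherwise). -/
noncomputable def sqrtm {n : ℕ} (A : Matrix (Fin n) (Fin n) ℝ) : Matrix (Fin n) (Fin n) ℝ :=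
  if h : A.PosSemidef then
    h.1.eigenvectorUnitary.1 * diagonal ((RCLike.ofReal : ℝ → ℝ) ∘ Real.sqrt ∘ h.1.eigenvalues) *
      (star h.1.eigenvectorUnitary : Matrix (Fin n) (Fin n) ℝ)
  else 0

/-- The Kyle cross-impact matrix `Λ_kyle(Σ,Ω) = (√Ω)⁻¹ √(√Ω Σ √Ω) (√Ω)⁻¹`. -/
noncomputable def kyle {n : ℕ} (S W : Matrix (Fin n) (Fin n) ℝ) : Matrix (Fin n) (Fin n) ℝ :=
  (sqrtm W)⁻¹ * sqrtm (sqrtm W * S * sqrtm W) * (sqrtm W)⁻¹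

/-!
Every invertible real matrix has a singular value decomposition `M = U Σ V` with `U`, `V`
orthogonal and `Σ` diagonal with positive entries. Rotation invariance is invariance under
orthogonal matrices, split invariance is invariance under positive diagonal matrices, and the
matrices under which a model is invariant are closed under products.
-/

namespace Matrix

variable {ι : Type*} [Fintype ι] [DecidableEq ι]

theorem PosDef.exists_eq_orthogonal_mul_diagonal_mul_transpose {A : Matrix ι ι ℝ}
    (hA : A.PosDef) :
    ∃ Q ∈ orthogonalGroup ι ℝ, ∃ e : ι → ℝ, (∀ i, 0 < e i) ∧ A = Q * diagonal e * Qᵀ := by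
  refine ⟨hA.1.eigenvectorUnitary, hA.1.eigenvectorUnitary.2, hA.1.eigenvalues,
    hA.eigenvalues_pos, ?_⟩
  simpa [RCLike.ofReal_real_eq_id, star_eq_conjTranspose] using hA.1.spectral_theorem

theorem exists_orthogonal_mul_diagonal_mul_orthogonal {M : Matrix ι ι ℝ} (hM : IsUnit M) :
    ∃ U ∈ orthogonalGroup ι ℝ, ∃ σ : ι → ℝ, (∀ i, 0 < σ i) ∧ ∃ V ∈ orthogonalGroup ι ℝ,
      M = U * diagonal σ * V := by
  have hMM : (Mᵀ * M).PosDef := by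
    simpa only [conjTranspose_eq_transpose_of_trivial] using
      PosDef.conjTranspose_mul_self M (mulVec_injective_iff_isUnit.mpr hM)
  obtain ⟨Q, hQ, e, he, hspec⟩ := hMM.exists_eq_orthogonal_mul_diagonal_mul_transpose
  have hQQt : Q * Qᵀ = 1 := (mem_orthogonalGroup_iff ι ℝ).mp hQ
  have hQtQ : Qᵀ * Q = 1 := (mem_orthogonalGroup_iff' ι ℝ).mp hQ
  set σ := fun i => √(e i)
  have hσ : ∀ i, 0 < σ i := fun i => Real.sqrt_pos.mpr (he i)
  have hσσ : diagonal σ⁻¹ * diagonal σ = 1 := by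
    rw [diagonal_mul_diagonal', ← diagonal_one]
    exact congrArg diagonal (funext fun i => inv_mul_cancel₀ (hσ i).ne')
  -- `M Q diag(σ)⁻¹` is orthogonal because `Mᵀ M = Q diag(σ²) Qᵀ`
  refine ⟨M * Q * diagonal σ⁻¹, ?_, σ, hσ, Qᵀ, ?_, ?_⟩
  · have hQtQ_mul (X : Matrix ι ι ℝ) : Qᵀ * (Q * X) = X := by
      rw [← Matrix.mul_assoc, hQtQ, Matrix.one_mul]
    rw [mem_orthogonalGroup_iff']
    calc (M * Q * diagonal σ⁻¹)ᵀ * (M * Q * diagonal σ⁻¹)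
        = diagonal fun i => (σ i)⁻¹ * (e i * (σ i)⁻¹) := by
          simp only [transpose_mul, diagonal_transpose, Matrix.mul_assoc, ← Matrix.mul_assoc Mᵀ M,
            hspec, hQtQ_mul, diagonal_mul_diagonal', Pi.inv_apply]
      _ = 1 := by
          rw [← diagonal_one]
          congr 1
          ext i
          field_simp
          rw [Real.sq_sqrt (he i).le, div_self (he i).ne']
  · rw [mem_orthogonalGroup_iff, transpose_transpose]
    exact hQtQ
  · rw [Matrix.mul_assoc (M * Q), hσσ, Matrix.mul_one, Matrix.mul_assoc, hQQt, Matrix.mul_one]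

end Matrix

abbrev CrossImpactModel (ι : Type*) :=
  Matrix ι ι ℝ → Matrix ι ι ℝ → Matrix ι ι ℝ → Matrix ι ι ℝ

namespace CrossImpactModel

variable {ι : Type*} [Fintype ι] [DecidableEq ι]

def IsSplitInvariant (Λ : CrossImpactModel ι) : Prop :=
  ∀ S W R : Matrix ι ι ℝ, S.PosSemidef → W.PosDef → ∀ d : ι → ℝ, (∀ i, 0 < d i) →
    Λ ((diagonal d)⁻¹ * S * (diagonal d)⁻¹) (diagonal d * W * diagonal d)
      ((diagonal d)⁻¹ * R * diagonal d) = (diagonal d)⁻¹ * Λ S W R * (diagonal d)⁻¹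

def IsRotationInvariant (Λ : CrossImpactModel ι) : Prop :=
  ∀ S W R : Matrix ι ι ℝ, S.PosSemidef → W.PosDef → ∀ O : Matrix ι ι ℝ, O * Oᵀ = 1 →
    Λ (O * S * Oᵀ) (O * W * Oᵀ) (O * R * Oᵀ) = O * Λ S W R * Oᵀ

def IsInvariantUnder (Λ : CrossImpactModel ι) (M : Matrix ι ι ℝ) : Prop :=
  ∀ S W R : Matrix ι ι ℝ, S.PosSemidef → W.PosDef →
    Λ ((M⁻¹)ᵀ * S * M⁻¹) (M * W * Mᵀ) ((M⁻¹)ᵀ * R * Mᵀ) = (M⁻¹)ᵀ * Λ S W R * M⁻¹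

variable {Λ : CrossImpactModel ι}

theorem IsInvariantUnder.mul {A B : Matrix ι ι ℝ} (hA : Λ.IsInvariantUnder A)
    (hB : Λ.IsInvariantUnder B) (hB_unit : IsUnit B) : Λ.IsInvariantUnder (A * B) := by
  intro S W R hS hW
  have hS' : ((B⁻¹)ᵀ * S * B⁻¹).PosSemidef := by
    simpa only [conjTranspose_eq_transpose_of_trivial] using hS.conjTranspose_mul_mul_same B⁻¹
  have hW' : (B * W * Bᵀ).PosDef := by
    simpa only [conjTranspose_eq_transpose_of_trivial] using
      hW.mul_mul_conjTranspose_same (vecMul_injective_iff_isUnit.mpr hB_unit)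
  have hAB := hA _ _ ((B⁻¹)ᵀ * R * Bᵀ) hS' hW'
  rw [hB S W R hS hW] at hAB
  simpa only [Matrix.mul_inv_rev, transpose_mul, Matrix.mul_assoc] using hAB

theorem IsRotationInvariant.isInvariantUnder (hrot : Λ.IsRotationInvariant) {O : Matrix ι ι ℝ}
    (hO : O ∈ orthogonalGroup ι ℝ) : Λ.IsInvariantUnder O := by
  have hOOt : O * Oᵀ = 1 := (mem_orthogonalGroup_iff ι ℝ).mp hO
  intro S W R hS hW
  rw [inv_eq_right_inv hOOt, transpose_transpose]
  exact hrot S W R hS hW O hOOt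

theorem IsSplitInvariant.isInvariantUnder_diagonal (hsplit : Λ.IsSplitInvariant) {d : ι → ℝ}
    (hd : ∀ i, 0 < d i) : Λ.IsInvariantUnder (diagonal d) := by
  intro S W R hS hW
  rw [transpose_nonsing_inv, diagonal_transpose]
  exact hsplit S W R hS hW d hd

theorem IsSplitInvariant.isInvariantUnder_of_isUnit (hsplit : Λ.IsSplitInvariant)
    (hrot : Λ.IsRotationInvariant) {M : Matrix ι ι ℝ} (hM : IsUnit M) : Λ.IsInvariantUnder M := by
  obtain ⟨U, hU, σ, hσ, V, hV, rfl⟩ := exists_orthogonal_mul_diagonal_mul_orthogonal hM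
  have hσ_unit : IsUnit (diagonal σ) :=
    isUnit_diagonal.mpr (Pi.isUnit_iff.mpr fun i => (hσ i).ne'.isUnit)
  exact ((hrot.isInvariantUnder hU).mul (hsplit.isInvariantUnder_diagonal hσ) hσ_unit).mul
    (hrot.isInvariantUnder hV) (Unitary.isUnit_coe (U := ⟨V, hV⟩))

end CrossImpactModel

/-- any split- and rotation-invariant cross-impact model is invariant
under the action of any nonsingular matrix. -/
theorem split_rot_invariant_implies_GL_invariant {n : ℕ}
    (Λ : Matrix (Fin n) (Fin n) ℝ → Matrix (Fin n) (Fin n) ℝ → Matrix (Fin n) (Fin n) ℝ → Matrix (Fin n) (Fin n) ℝ)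
    (hsplit : ∀ S W R : Matrix (Fin n) (Fin n) ℝ, S.PosSemidef → W.PosDef → ∀ d : Fin n → ℝ, (∀ i, 0 < d i) →
      Λ ((diagonal d)⁻¹ * S * (diagonal d)⁻¹) (diagonal d * W * diagonal d)
        ((diagonal d)⁻¹ * R * diagonal d)
        = (diagonal d)⁻¹ * Λ S W R * (diagonal d)⁻¹)
    (hrot : ∀ S W R : Matrix (Fin n) (Fin n) ℝ, S.PosSemidef → W.PosDef → ∀ O : Matrix (Fin n) (Fin n) ℝ, O * Oᵀ = 1 →
      Λ (O * S * Oᵀ) (O * W * Oᵀ) (O * R * Oᵀ) = O * Λ S W R * Oᵀ)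
    (M : Matrix (Fin n) (Fin n) ℝ) (hM : IsUnit M.det)
    (S W R : Matrix (Fin n) (Fin n) ℝ) (hS : S.PosSemidef) (hW : W.PosDef) :
    Λ ((M⁻¹)ᵀ * S * M⁻¹) (M * W * Mᵀ) ((M⁻¹)ᵀ * R * Mᵀ)
      = (M⁻¹)ᵀ * Λ S W R * M⁻¹ :=
  CrossImpactModel.IsSplitInvariant.isInvariantUnder_of_isUnit hsplit hrot
    ((isUnit_iff_isUnit_det M).mpr hM) S W R hS hW
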